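/- The function $\tilde{d}(z, z') = \frac{|z - z'|}{\sqrt{z_n} + \sqrt{z'_n} + \sqrt{|z - z'|}}$ on the closed half-space $\overline{\mathbb{H}} = \{z \in \mathbb{R}^n : z_n \geq 0\}$ is symmetric, vanishes exactly on the diagonal, and satisfies the quasi-triangle inequality $\tilde{d}(z, z'') \leq C(\tilde{d}(z, z') + \tilde{d}(z', z''))$ for some universal constant $C > 0$. -/
import Mathlib


/-- The quasi-metric `d̃(z,z') = |z-z'| / (√z_n + √z'_n + √|z-z'|)` on the closed
half-space (interpreted as `0` when `z = z'`). -/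
noncomputable def dtil {n : ℕ} (z z' : EuclideanSpace ℝ (Fin (n + 1))) : ℝ :=
  ‖z - z'‖ / (Real.sqrt (z (Fin.last n)) + Real.sqrt (z' (Fin.last n)) + Real.sqrt ‖z - z'‖)

lemma my_sqrt_add_le {x y : ℝ} (hx : 0 ≤ x) (hy : 0 ≤ y) :
    Real.sqrt (x + y) ≤ Real.sqrt x + Real.sqrt y := by
  have h : x + y ≤ (Real.sqrt x + Real.sqrt y) ^ 2 := by
    nlinarith [Real.sq_sqrt hx, Real.sq_sqrt hy, Real.sqrt_nonneg x, Real.sqrt_nonneg y]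
  calc Real.sqrt (x + y) ≤ Real.sqrt ((Real.sqrt x + Real.sqrt y) ^ 2) := Real.sqrt_le_sqrt h
    _ = Real.sqrt x + Real.sqrt y := Real.sqrt_sq (by positivity)

lemma my_abs_apply_le {m : ℕ} (x : EuclideanSpace ℝ (Fin m)) (i : Fin m) : |x i| ≤ ‖x‖ := by
  rw [EuclideanSpace.norm_eq]
  have hsum : ‖x i‖ ^ 2 ≤ ∑ j, ‖x j‖ ^ 2 :=
    Finset.single_le_sum (f := fun j => ‖x j‖ ^ 2) (fun j _ => sq_nonneg _) (Finset.mem_univ i)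
  calc |x i| = Real.sqrt (‖x i‖ ^ 2) := by
        rw [Real.norm_eq_abs, Real.sqrt_sq_eq_abs, abs_abs]
    _ ≤ Real.sqrt (∑ j, ‖x j‖ ^ 2) := Real.sqrt_le_sqrt hsum

/-- `√w' ≤ √w + √‖z - z'‖` when `w, w'` are the last coordinates. -/
lemma my_sqrt_coord_le {n : ℕ} (z z' : EuclideanSpace ℝ (Fin (n + 1)))
    (hz : 0 ≤ z (Fin.last n)) :
    Real.sqrt (z' (Fin.last n)) ≤ Real.sqrt (z (Fin.last n)) + Real.sqrt ‖z - z'‖ := by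
  have h1 : z' (Fin.last n) ≤ z (Fin.last n) + ‖z - z'‖ := by
    have h2 : |(z - z') (Fin.last n)| ≤ ‖z - z'‖ := my_abs_apply_le _ _
    have h3 : (z - z') (Fin.last n) = z (Fin.last n) - z' (Fin.last n) := rfl
    rw [h3] at h2
    have := neg_abs_le (z (Fin.last n) - z' (Fin.last n))
    linarith [abs_nonneg (z (Fin.last n) - z' (Fin.last n))]
  calc Real.sqrt (z' (Fin.last n)) ≤ Real.sqrt (z (Fin.last n) + ‖z - z'‖) :=
        Real.sqrt_le_sqrt h1
    _ ≤ Real.sqrt (z (Fin.last n)) + Real.sqrt ‖z - z'‖ :=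
        my_sqrt_add_le hz (norm_nonneg _)

lemma my_div_den_mono {a d1 d2 : ℝ} (ha : 0 ≤ a) (h1 : Real.sqrt a ≤ d1) (h12 : d1 ≤ d2) :
    a / d2 ≤ a / d1 := by
  rcases eq_or_lt_of_le ha with h | h
  · simp [← h]
  · have hd1 : 0 < d1 := lt_of_lt_of_le (Real.sqrt_pos.mpr h) h1
    gcongr

/-- On the closed half-space, `d̃` is symmetric, vanishes exactly on the
diagonal, and satisfies a quasi-triangle inequality with a universal constant. -/
theorem stmt6 :
    ∃ C > (0 : ℝ), ∀ (n : ℕ) (z z' z'' : EuclideanSpace ℝ (Fin (n + 1))),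
      0 ≤ z (Fin.last n) → 0 ≤ z' (Fin.last n) → 0 ≤ z'' (Fin.last n) →
      dtil z z' = dtil z' z ∧
      (dtil z z' = 0 ↔ z = z') ∧
      dtil z z'' ≤ C * (dtil z z' + dtil z' z'') := by
  refine ⟨6, by norm_num, ?_⟩
  intro n z z' z'' hz hz' hz''
  set s := Real.sqrt (z (Fin.last n)) with hs_def
  set s' := Real.sqrt (z' (Fin.last n)) with hs'_def
  set s'' := Real.sqrt (z'' (Fin.last n)) with hs''_def
  have hs : 0 ≤ s := Real.sqrt_nonneg _
  have hs' : 0 ≤ s' := Real.sqrt_nonneg _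
  have hs'' : 0 ≤ s'' := Real.sqrt_nonneg _
  set a := ‖z - z'‖ with ha_def
  set b := ‖z' - z''‖ with hb_def
  set c := ‖z - z''‖ with hc_def
  have ha : 0 ≤ a := norm_nonneg _
  have hb : 0 ≤ b := norm_nonneg _
  have hc : 0 ≤ c := norm_nonneg _
  have sa : 0 ≤ Real.sqrt a := Real.sqrt_nonneg _
  have sb : 0 ≤ Real.sqrt b := Real.sqrt_nonneg _
  have sc : 0 ≤ Real.sqrt c := Real.sqrt_nonneg _
  refine ⟨?_, ?_, ?_⟩
  · unfold dtil
    rw [norm_sub_rev, add_comm (Real.sqrt (z (Fin.last n)))]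
  · constructor
    · intro h
      rcases div_eq_zero_iff.mp h with h0 | h0
      · exact sub_eq_zero.mp (norm_eq_zero.mp h0)
      · have : Real.sqrt ‖z - z'‖ = 0 := by
          have h1 : Real.sqrt ‖z - z'‖ ≤ 0 := by
            have := Real.sqrt_nonneg (z (Fin.last n))
            have := Real.sqrt_nonneg (z' (Fin.last n))
            linarith
          linarith [Real.sqrt_nonneg ‖z - z'‖]
        have : ‖z - z'‖ ≤ 0 := Real.sqrt_eq_zero'.mp this
        exact sub_eq_zero.mp (norm_eq_zero.mp (le_antisymm this (norm_nonneg _)))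
    · intro h
      simp [dtil, h]
  · -- quasi-triangle inequality
    have htri : c ≤ a + b := by
      have : z - z'' = (z - z') + (z' - z'') := by abel
      rw [hc_def, this]; exact norm_add_le _ _
    have htri2 : a ≤ c + b := by
      calc a = ‖(z - z'') + (z'' - z')‖ := by rw [ha_def]; congr 1; abel
        _ ≤ ‖z - z''‖ + ‖z'' - z'‖ := norm_add_le _ _
        _ = c + b := by rw [norm_sub_rev z'' z']
    have htri3 : b ≤ c + a := by
      calc b = ‖(z' - z) + (z - z'')‖ := by rw [hb_def]; congr 1; abel
        _ ≤ ‖z' - z‖ + ‖z - z''‖ := norm_add_le _ _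
        _ = c + a := by rw [norm_sub_rev z' z]; ring
    -- sqrt triangle consequences
    have sqc : Real.sqrt c ≤ Real.sqrt a + Real.sqrt b :=
      le_trans (Real.sqrt_le_sqrt htri) (my_sqrt_add_le ha hb)
    have sqa : Real.sqrt a ≤ Real.sqrt c + Real.sqrt b :=
      le_trans (Real.sqrt_le_sqrt htri2) (my_sqrt_add_le hc hb)
    have sqb : Real.sqrt b ≤ Real.sqrt c + Real.sqrt a :=
      le_trans (Real.sqrt_le_sqrt htri3) (my_sqrt_add_le hc ha)
    -- vertical coordinate comparisons
    have hv1 : s' ≤ s + Real.sqrt a := my_sqrt_coord_le z z' hz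
    have hv2 : s' ≤ s'' + Real.sqrt b := by
      have := my_sqrt_coord_le z'' z' hz''
      rwa [norm_sub_rev] at this
    set D : ℝ := s + s'' + Real.sqrt c with hD_def
    have hD : 0 ≤ D := by positivity
    set m : ℝ := Real.sqrt (max a b) with hm_def
    have hmnn : 0 ≤ m := Real.sqrt_nonneg _
    have hma : Real.sqrt a ≤ m := Real.sqrt_le_sqrt (le_max_left _ _)
    have hmb : Real.sqrt b ≤ m := Real.sqrt_le_sqrt (le_max_right _ _)
    have hmm : m * m = max a b := Real.mul_self_sqrt (le_max_of_le_left ha)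
    have hcm : c ≤ 2 * (m * m) := by
      rw [hmm]
      calc c ≤ a + b := htri
        _ ≤ max a b + max a b := add_le_add (le_max_left _ _) (le_max_right _ _)
        _ = 2 * max a b := by ring
    have hscm : Real.sqrt c ≤ 2 * m := by linarith [le_trans sqc (add_le_add hma hmb)]
    -- the two quasi-metric values
    have hA : max a b / (D + 2 * m) ≤ dtil z z' + dtil z' z'' := by
      have hAnn : 0 ≤ dtil z z' := div_nonneg ha (by positivity)
      have hBnn : 0 ≤ dtil z' z'' := div_nonneg hb (by positivity)
      rcases max_cases a b with ⟨hmax, _⟩ | ⟨hmax, _⟩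
      · rw [hmax]
        have key : a / (D + 2 * m) ≤ dtil z z' := by
          apply my_div_den_mono ha
          · show Real.sqrt a ≤ s + s' + Real.sqrt a; linarith
          · show s + s' + Real.sqrt a ≤ D + 2 * m
            have : s' ≤ s'' + Real.sqrt b := hv2
            have : Real.sqrt a ≤ Real.sqrt c + m := by linarith
            rw [hD_def]; linarith
        linarith
      · rw [hmax]
        have key : b / (D + 2 * m) ≤ dtil z' z'' := by
          apply my_div_den_mono hb
          · show Real.sqrt b ≤ s' + s'' + Real.sqrt b; linarith
          · show s' + s'' + Real.sqrt b ≤ D + 2 * m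
            have : s' ≤ s + Real.sqrt a := hv1
            have : Real.sqrt b ≤ Real.sqrt c + m := by linarith
            rw [hD_def]; linarith
        linarith
    have hAnn : 0 ≤ dtil z z' := div_nonneg ha (by positivity)
    have hBnn : 0 ≤ dtil z' z'' := div_nonneg hb (by positivity)
    have hgoal : dtil z z'' = c / D := rfl
    rw [hgoal]
    rcases eq_or_lt_of_le hD with hD0 | hD0
    · -- D = 0, hence c = 0
      have hc0 : c = 0 := by
        have : Real.sqrt c ≤ 0 := by rw [hD_def] at hD0; linarith [hD0.symm ▸ le_refl (0:ℝ)]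
        have h1 : Real.sqrt c = 0 := le_antisymm this sc
        have := Real.sqrt_eq_zero'.mp h1
        linarith
      rw [hc0, zero_div]
      positivity
    · rcases le_or_gt m D with hmD | hmD
      · -- case m ≤ D
        have h1 : c / D ≤ 2 * (m * m) / D := by gcongr
        have h2 : (m * m) / (3 * D) ≤ max a b / (D + 2 * m) := by
          rw [hmm]
          apply my_div_den_mono (le_max_of_le_left ha)
          · show Real.sqrt (max a b) ≤ D + 2 * m; rw [← hm_def]; linarith
          · linarith
        calc c / D ≤ 2 * (m * m) / D := h1
          _ = 6 * ((m * m) / (3 * D)) := by field_simp; ring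
          _ ≤ 6 * (max a b / (D + 2 * m)) := by linarith
          _ ≤ 6 * (dtil z z' + dtil z' z'') := by linarith
      · -- case D < m
        have hm0 : 0 < m := lt_trans hD0 hmD
        have h1 : c / D ≤ Real.sqrt c := by
          rw [div_le_iff₀ hD0]
          calc c = Real.sqrt c * Real.sqrt c := (Real.mul_self_sqrt hc).symm
            _ ≤ Real.sqrt c * D := by
                apply mul_le_mul_of_nonneg_left _ sc
                rw [hD_def]; linarith
            _ = Real.sqrt c * D := rfl
        have h2 : m / 3 ≤ max a b / (D + 2 * m) := by
          rw [← hmm]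
          have h3 : D + 2 * m ≤ 3 * m := by linarith
          have h4 : (0:ℝ) < D + 2 * m := by linarith
          rw [div_le_div_iff₀ (by norm_num) h4]
          calc m * (D + 2 * m) ≤ m * (3 * m) := by
                apply mul_le_mul_of_nonneg_left h3 hmnn
            _ = m * m * 3 := by ring
        calc c / D ≤ Real.sqrt c := h1
          _ ≤ 2 * m := hscm
          _ = 6 * (m / 3) := by ring
          _ ≤ 6 * (max a b / (D + 2 * m)) := by linarith
          _ ≤ 6 * (dtil z z' + dtil z' z'') := by linarith
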